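/- arXiv:2602.10566 — 2 statements merged into one kernel-verified Lean document; each statement's English description precedes it below -/
import Mathlib

section
/- Let n, k, K ≥ 1. Let μ_1, …, μ_K ∈ ℝ^k be distinct centers with separation margin Δ := min_{a≠b} ‖μ_a − μ_b‖_2 > 0, let g⋆ : [n] → [K], and set u_i := μ_{g⋆(i)} for each i ∈ [n]. Let ũ_1, …, ũ_n ∈ ℝ^k satisfy the mean-square bound Σ_{i=1}^n ‖ũ_i − u_i‖_2^2 ≤ n·η^2 for some η ≥ 0. Then any nearest-center assignment ĝ satisfies the Hamming error bound #{i ∈ [n] : ĝ(i) ≠ g⋆(i)} ≤ 16·n·η^2 / Δ^2. -/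
open BigOperators

/-- Hamming error bound for nearest-center assignments under a
mean-square perturbation bound. -/
theorem stmt_4 {n k K : ℕ} (hn : 1 ≤ n) (hk : 1 ≤ k) (hK : 1 ≤ K)
    (μ : Fin K → EuclideanSpace ℝ (Fin k)) {Δ : ℝ} (hΔpos : 0 < Δ)
    (hsep : ∀ a b : Fin K, a ≠ b → Δ ≤ ‖μ a - μ b‖)
    (gstar : Fin n → Fin K)
    (u : Fin n → EuclideanSpace ℝ (Fin k)) (hu : ∀ i, u i = μ (gstar i))
    (utilde : Fin n → EuclideanSpace ℝ (Fin k))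
    {η : ℝ} (hη0 : 0 ≤ η)
    (hms : ∑ i : Fin n, ‖utilde i - u i‖ ^ 2 ≤ (n : ℝ) * η ^ 2)
    (ghat : Fin n → Fin K)
    (hghat : ∀ (i : Fin n) (a : Fin K), ‖utilde i - μ (ghat i)‖ ≤ ‖utilde i - μ a‖) :
    ((Finset.univ.filter fun i : Fin n => ghat i ≠ gstar i).card : ℝ)
      ≤ 16 * (n : ℝ) * η ^ 2 / Δ ^ 2 := by
  set S := Finset.univ.filter fun i : Fin n => ghat i ≠ gstar i with hS
  -- For each misclassified i, ‖utilde i - u i‖ ≥ Δ/2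
  have hkey : ∀ i ∈ S, (Δ / 2) ^ 2 ≤ ‖utilde i - u i‖ ^ 2 := by
    intro i hi
    have hne : ghat i ≠ gstar i := (Finset.mem_filter.mp hi).2
    have h1 : Δ ≤ ‖μ (ghat i) - μ (gstar i)‖ := hsep _ _ hne
    have h2 : ‖μ (ghat i) - μ (gstar i)‖ ≤
        ‖utilde i - μ (ghat i)‖ + ‖utilde i - μ (gstar i)‖ := by
      have := norm_sub_le (μ (ghat i) - utilde i) (μ (gstar i) - utilde i)
      simpa [norm_sub_rev, sub_sub_sub_cancel_right] using this
    have h3 : ‖utilde i - μ (ghat i)‖ ≤ ‖utilde i - μ (gstar i)‖ := hghat i _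
    have h4 : Δ ≤ 2 * ‖utilde i - u i‖ := by
      rw [hu i]; nlinarith
    have h5 : Δ / 2 ≤ ‖utilde i - u i‖ := by linarith
    have : 0 ≤ Δ / 2 := by linarith
    nlinarith
  have hsum : (S.card : ℝ) * (Δ / 2) ^ 2 ≤ ∑ i : Fin n, ‖utilde i - u i‖ ^ 2 := by
    calc (S.card : ℝ) * (Δ / 2) ^ 2 = ∑ _i ∈ S, (Δ / 2) ^ 2 := by
          rw [Finset.sum_const, nsmul_eq_mul]
      _ ≤ ∑ i ∈ S, ‖utilde i - u i‖ ^ 2 := Finset.sum_le_sum hkey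
      _ ≤ ∑ i : Fin n, ‖utilde i - u i‖ ^ 2 := by
          apply Finset.sum_le_sum_of_subset_of_nonneg (Finset.subset_univ S)
          intro i _ _; positivity
  have hΔ2 : 0 < Δ ^ 2 := by positivity
  rw [le_div_iff₀ hΔ2]
  nlinarith [hsum.trans hms]
end

section
/- Let M be a real symmetric n×n matrix (n ≥ 2) whose top eigenvalue is simple with gap λ_1(M) − λ_2(M) ≥ γ for some γ > 0, and let v_1 be a unit eigenvector of M for λ_1(M). Let M' be any real symmetric n×n matrix and let v_1' be any unit eigenvector of M' associated with its largest eigenvalue λ_1(M'). Then ‖v_1 v_1^⊤ − v_1' (v_1')^⊤‖ ≤ 2‖M − M'‖ / γ. -/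
open Matrix MeasureTheory ProbabilityTheory BigOperators

/-- Operator norm (induced by the Euclidean norm) of a real square matrix. -/
noncomputable def opNorm {n : ℕ} (M : Matrix (Fin n) (Fin n) ℝ) : ℝ :=
  ‖Matrix.toEuclideanCLM (𝕜 := ℝ) M‖

/-- `eigDesc hM j` is the `(j+1)`-st largest eigenvalue of the symmetric matrix `M`
(0-indexed: `eigDesc hM 0 = λ₁(M)`), and `0` for out-of-range indices. -/
noncomputable def eigDesc {n : ℕ} {M : Matrix (Fin n) (Fin n) ℝ} (hM : M.IsHermitian) (j : ℕ) : ℝ :=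
  if h : j < n then (hM.eigenvalues ∘ Tuple.sort hM.eigenvalues) (Fin.rev ⟨j, h⟩) else 0

/-- The `k`-th eigengap `gap_k(M) = min (λ_k − λ_{k+1}, λ_{k−1} − λ_k)` (1-indexed),
with the convention that the second term is `+∞` (hence dropped) when `k = 1`. -/
noncomputable def eigGap {n : ℕ} {M : Matrix (Fin n) (Fin n) ℝ} (hM : M.IsHermitian) (k : ℕ) : ℝ :=
  if k = 1 then eigDesc hM (k - 1) - eigDesc hM k
  else min (eigDesc hM (k - 1) - eigDesc hM k) (eigDesc hM (k - 2) - eigDesc hM (k - 1))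

/-- `topProj hM k` : the orthogonal projection onto the span of the (chosen) eigenvectors
of `M` associated with its `k` largest eigenvalues. -/
noncomputable def topProj {n : ℕ} {M : Matrix (Fin n) (Fin n) ℝ} (hM : M.IsHermitian) (k : ℕ) :
    Matrix (Fin n) (Fin n) ℝ :=
  ∑ j ∈ Finset.univ.filter (fun j : Fin n => (j : ℕ) < k),
    Matrix.vecMulVec
      (fun i => (hM.eigenvectorUnitary : Matrix (Fin n) (Fin n) ℝ) i (Tuple.sort hM.eigenvalues j.rev))
      (fun i => (hM.eigenvectorUnitary : Matrix (Fin n) (Fin n) ℝ) i (Tuple.sort hM.eigenvalues j.rev))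

/-- `Q` is the orthogonal projection onto a `k`-dimensional invariant subspace of `M`
spanned by eigenvectors associated with its `k` largest eigenvalues. -/
def IsTopKEigenProj {n : ℕ} (k : ℕ) {M : Matrix (Fin n) (Fin n) ℝ} (hM : M.IsHermitian)
    (Q : Matrix (Fin n) (Fin n) ℝ) : Prop :=
  ∃ v : Fin k → (Fin n → ℝ),
    (∀ a b : Fin k, v a ⬝ᵥ v b = if a = b then (1:ℝ) else 0) ∧
    (∀ j : Fin k, M *ᵥ v j = eigDesc hM (j : ℕ) • v j) ∧
    Q = ∑ j : Fin k, Matrix.vecMulVec (v j) (v j)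

open scoped RealInnerProductSpace
open WithLp

/-! Let `c = ⟪v₁, v₁'⟫`, `w = v₁' - c • v₁` and `s = ‖w‖ = √(1 - c²)`, the sine of the angle
between the two eigenvectors; `s` bounds the norm of the difference of the two rank-one projectors.
With `ε = ‖M - M'‖`, testing against `v₁` gives Weyl's bound `λ₁(M') ≥ λ₁(M) - ε`. Testing the
eigen-equation `M' v₁' = λ₁(M') v₁'` against `w ⊥ v₁`, on which the Rayleigh quotient of `M` is at
most `λ₂(M)`, gives `(λ₁(M') - λ₂(M)) s² ≤ ε s`. Hence `(γ - ε) s² ≤ ε s`, and since `s ≤ 1` this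
yields `γ s ≤ 2 ε`. -/

section Rayleigh

variable {E ι : Type*} [NormedAddCommGroup E] [InnerProductSpace ℝ E] [Fintype ι]
  {T : E →ₗ[ℝ] E} {b : OrthonormalBasis ι ℝ E} {μ : ι → ℝ}

lemma inner_eigenbasis_apply (hT : T.IsSymmetric) (hb : ∀ i, T (b i) = μ i • b i)
    (i : ι) (x : E) : ⟪b i, T x⟫ = μ i * ⟪b i, x⟫ := by
  rw [← hT, hb, real_inner_smul_left]

lemma inner_apply_self_eq_sum (hT : T.IsSymmetric) (hb : ∀ i, T (b i) = μ i • b i) (x : E) :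
    ⟪x, T x⟫ = ∑ i, μ i * ⟪b i, x⟫ ^ 2 := by
  rw [← b.sum_inner_mul_inner]
  refine Finset.sum_congr rfl fun i _ => ?_
  rw [inner_eigenbasis_apply hT hb, real_inner_comm]
  ring

lemma inner_apply_self_le (hT : T.IsSymmetric) (hb : ∀ i, T (b i) = μ i • b i) {m : ℝ}
    (hμ : ∀ i, μ i ≤ m) (x : E) : ⟪x, T x⟫ ≤ m * ‖x‖ ^ 2 := by
  rw [inner_apply_self_eq_sum hT hb, ← b.sum_sq_inner_right, Finset.mul_sum]
  gcongr with i
  exact hμ i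

lemma inner_apply_self_le_of_inner_eq_zero (hT : T.IsSymmetric) (hb : ∀ i, T (b i) = μ i • b i)
    {i₀ : ι} {m l : ℝ} (hμ : ∀ i ≠ i₀, μ i ≤ m) (hml : m < l) {v : E} (hv : v ≠ 0)
    (hTv : T v = l • v) {x : E} (hx : ⟪v, x⟫ = 0) : ⟪x, T x⟫ ≤ m * ‖x‖ ^ 2 := by
  have hv_coord : ∀ i ≠ i₀, ⟪v, b i⟫ = 0 := fun i hi => by
    have h := inner_eigenbasis_apply hT hb i v
    rw [hTv, real_inner_smul_right] at h
    by_contra hne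
    rw [real_inner_comm] at hne
    exact (hμ i hi).not_gt (hml.trans_eq (mul_right_cancel₀ hne h))
  have hexpand : ∀ y, ⟪v, b i₀⟫ * ⟪b i₀, y⟫ = ⟪v, y⟫ := fun y => by
    rw [← b.sum_inner_mul_inner v y, Finset.sum_eq_single i₀ (fun i _ hi => by simp [hv_coord i hi])
      (by simp)]
  have hv₀ : ⟪v, b i₀⟫ ≠ 0 := fun h => hv <| by
    rw [← inner_self_eq_zero (𝕜 := ℝ), ← hexpand, h, zero_mul]
  have hx₀ : ⟪b i₀, x⟫ = 0 := by
    rw [← hexpand, mul_eq_zero] at hx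
    exact hx.resolve_left hv₀
  rw [inner_apply_self_eq_sum hT hb, ← b.sum_sq_inner_right, Finset.mul_sum]
  refine Finset.sum_le_sum fun i _ => ?_
  by_cases hi : i = i₀
  · simp [hi, hx₀]
  · exact mul_le_mul_of_nonneg_right (hμ i hi) (sq_nonneg _)

end Rayleigh

section EigDesc

variable {n : ℕ} {M : Matrix (Fin n) (Fin n) ℝ} (hM : M.IsHermitian)

lemma eigDesc_antitone {j k : ℕ} (hjk : j ≤ k) (hk : k < n) : eigDesc hM k ≤ eigDesc hM j := by
  rw [eigDesc, eigDesc, dif_pos hk, dif_pos (hjk.trans_lt hk)]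
  exact Tuple.monotone_sort hM.eigenvalues (by simp [Fin.le_def]; omega)

lemma eigenvalues_eq_eigDesc (i : Fin n) :
    hM.eigenvalues i = eigDesc hM (n - 1 - (Tuple.sort hM.eigenvalues).symm i) := by
  have hi := ((Tuple.sort hM.eigenvalues).symm i).isLt
  rw [eigDesc, dif_pos (by omega), Function.comp_apply]
  congr
  rw [← Equiv.symm_apply_eq]
  ext
  simp only [Fin.val_rev]
  omega

lemma eigenvalues_le_eigDesc_zero (i : Fin n) : hM.eigenvalues i ≤ eigDesc hM 0 := by
  rw [eigenvalues_eq_eigDesc hM i]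
  exact eigDesc_antitone hM (Nat.zero_le _) (by omega)

lemma exists_forall_ne_eigenvalues_le_eigDesc_one (hn : 0 < n) :
    ∃ i₀, ∀ i ≠ i₀, hM.eigenvalues i ≤ eigDesc hM 1 := by
  refine ⟨Tuple.sort hM.eigenvalues ⟨n - 1, by omega⟩, fun i hi => ?_⟩
  have hpos : ((Tuple.sort hM.eigenvalues).symm i : ℕ) ≠ n - 1 := fun h =>
    hi (by rw [← Equiv.symm_apply_eq]; exact Fin.ext h)
  have := ((Tuple.sort hM.eigenvalues).symm i).isLt
  rw [eigenvalues_eq_eigDesc hM i]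
  exact eigDesc_antitone hM (by omega) (by omega)

lemma toEuclideanLin_eigenvectorBasis (i : Fin n) :
    toEuclideanLin M (hM.eigenvectorBasis i) = hM.eigenvalues i • hM.eigenvectorBasis i := by
  ext1
  simp [hM.mulVec_eigenvectorBasis i]

lemma inner_toEuclideanCLM_self_le_eigDesc_zero (x : EuclideanSpace ℝ (Fin n)) :
    ⟪x, toEuclideanCLM (𝕜 := ℝ) M x⟫ ≤ eigDesc hM 0 * ‖x‖ ^ 2 :=
  inner_apply_self_le (isSymmetric_toEuclideanLin_iff.2 hM) (toEuclideanLin_eigenvectorBasis hM)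
    (eigenvalues_le_eigDesc_zero hM) x

lemma inner_toEuclideanCLM_self_le_eigDesc_one (hgap : eigDesc hM 1 < eigDesc hM 0)
    {v : EuclideanSpace ℝ (Fin n)} (hv : v ≠ 0)
    (hMv : toEuclideanCLM (𝕜 := ℝ) M v = eigDesc hM 0 • v)
    {x : EuclideanSpace ℝ (Fin n)} (hx : ⟪v, x⟫ = 0) :
    ⟪x, toEuclideanCLM (𝕜 := ℝ) M x⟫ ≤ eigDesc hM 1 * ‖x‖ ^ 2 := by
  have hn : 0 < n := Nat.pos_of_ne_zero fun h => by subst h; exact hv (Subsingleton.elim _ _)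
  obtain ⟨i₀, hi₀⟩ := exists_forall_ne_eigenvalues_le_eigDesc_one hM hn
  exact inner_apply_self_le_of_inner_eq_zero (isSymmetric_toEuclideanLin_iff.2 hM)
    (toEuclideanLin_eigenvectorBasis hM) hi₀ hgap hv hMv hx

end EigDesc

section SinTheta

variable {E : Type*} [NormedAddCommGroup E] [InnerProductSpace ℝ E] {u v : E}

lemma inner_sub_inner_smul_self (hu : ‖u‖ = 1) (v : E) : ⟪u, v - ⟪u, v⟫ • u⟫ = 0 := by
  rw [inner_sub_right, real_inner_smul_right, real_inner_self_eq_norm_sq, hu]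
  ring

lemma norm_sub_inner_smul_sq (hu : ‖u‖ = 1) (v : E) :
    ‖v - ⟪u, v⟫ • u‖ ^ 2 = ‖v‖ ^ 2 - ⟪u, v⟫ ^ 2 := by
  rw [@norm_sub_sq_real, real_inner_smul_right, norm_smul, hu, Real.norm_eq_abs, mul_one, sq_abs,
    real_inner_comm]
  ring

lemma norm_inner_smul_sub_inner_smul_le (hu : ‖u‖ = 1) (hv : ‖v‖ = 1) (x : E) :
    ‖⟪u, x⟫ • u - ⟪v, x⟫ • v‖ ≤ √(1 - ⟪u, v⟫ ^ 2) * ‖x‖ := by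
  set c := ⟪u, v⟫
  set a := ⟪u, x⟫
  set w := v - c • u with hw_def
  set t := ⟪w, x - a • u⟫ with ht
  have hw : ‖w‖ ^ 2 = 1 - c ^ 2 := by rw [norm_sub_inner_smul_sq hu, hv, one_pow]
  have hwu : ⟪w, u⟫ = 0 := by rw [real_inner_comm]; exact inner_sub_inner_smul_self hu v
  have hvx : ⟪v, x⟫ = c * a + t := by
    rw [ht, inner_sub_right, real_inner_smul_right, hwu, hw_def, inner_sub_left,
      real_inner_smul_left]
    ring
  have hnorm_sq : ‖a • u - ⟪v, x⟫ • v‖ ^ 2 = (1 - c ^ 2) * a ^ 2 + t ^ 2 := by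
    rw [@norm_sub_sq_real, norm_smul, norm_smul, hu, hv, real_inner_smul_left,
      real_inner_smul_right, Real.norm_eq_abs, Real.norm_eq_abs, mul_one, mul_one, sq_abs, sq_abs,
      hvx]
    ring
  have hCS : t ^ 2 ≤ (1 - c ^ 2) * (‖x‖ ^ 2 - a ^ 2) := by
    rw [← hw, ← norm_sub_inner_smul_sq hu x, ← mul_pow, ← sq_abs]
    exact pow_le_pow_left₀ (abs_nonneg _) (abs_real_inner_le_norm _ _) 2
  rw [← pow_le_pow_iff_left₀ (norm_nonneg _) (by positivity) two_ne_zero, hnorm_sq, mul_pow,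
    Real.sq_sqrt (by rw [← hw]; positivity)]
  linarith

end SinTheta

section DavisKahan

variable {E : Type*} [NormedAddCommGroup E] [InnerProductSpace ℝ E]

lemma inner_apply_le_opNorm (A : E →L[ℝ] E) (x y : E) : ⟪x, A y⟫ ≤ ‖x‖ * (‖A‖ * ‖y‖) :=
  (real_inner_le_norm _ _).trans (mul_le_mul_of_nonneg_left (A.le_opNorm y) (norm_nonneg x))

theorem sqrt_one_sub_inner_sq_le_of_eigengap {T T' : E →L[ℝ] E} {v v' : E} {l₁ l₂ l₁' γ : ℝ}
    (hv : ‖v‖ = 1) (hv' : ‖v'‖ = 1) (hTv : T v = l₁ • v) (hT'v' : T' v' = l₁' • v')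
    (hT : ∀ x, ⟪v, x⟫ = 0 → ⟪x, T x⟫ ≤ l₂ * ‖x‖ ^ 2) (hT' : ∀ x, ⟪x, T' x⟫ ≤ l₁' * ‖x‖ ^ 2)
    (hγ : 0 < γ) (hgap : γ ≤ l₁ - l₂) :
    √(1 - ⟪v, v'⟫ ^ 2) ≤ 2 * ‖T - T'‖ / γ := by
  set c := ⟪v, v'⟫
  set w := v' - c • v
  set s := ‖w‖
  have hs_sq : s ^ 2 = 1 - c ^ 2 := by rw [norm_sub_inner_smul_sq hv, hv', one_pow]
  have hs1 : s ≤ 1 := by nlinarith [norm_nonneg w, sq_nonneg c]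
  have hvw : ⟪v, w⟫ = 0 := inner_sub_inner_smul_self hv v'
  have hwv : ⟪w, v⟫ = 0 := by rw [real_inner_comm]; exact hvw
  have hv'_eq : v' = w + c • v := (sub_add_cancel v' (c • v)).symm
  have hweyl : l₁ - ‖T - T'‖ ≤ l₁' := by
    have hl₁ : ⟪v, T v⟫ = l₁ := by
      rw [hTv, real_inner_smul_right, real_inner_self_eq_norm_sq, hv]; ring
    have h := inner_apply_le_opNorm (T - T') v v
    have h' := hT' v
    rw [_root_.sub_apply, inner_sub_right, hl₁, hv] at h
    rw [hv] at h'
    linarith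
  have hw_T'v' : ⟪w, T' v'⟫ = l₁' * s ^ 2 := by
    rw [hT'v', real_inner_smul_right, hv'_eq, inner_add_right, real_inner_smul_right,
      hwv, real_inner_self_eq_norm_sq]
    ring
  have hw_Tv' : ⟪w, T v'⟫ = ⟪w, T w⟫ := by
    rw [hv'_eq, map_add, map_smul, hTv, inner_add_right, real_inner_smul_right,
      real_inner_smul_right, hwv]
    ring
  have hperturb : (l₁' - l₂) * s ^ 2 ≤ ‖T - T'‖ * s := by
    have h := inner_apply_le_opNorm (T' - T) w v'
    rw [norm_sub_rev T' T, _root_.sub_apply, inner_sub_right, hw_T'v', hw_Tv', hv'] at h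
    have := hT w hvw
    linarith
  have hs0 : 0 ≤ s := norm_nonneg w
  have hs_gap : s * (γ * s - ‖T - T'‖ * (1 + s)) ≤ 0 := by nlinarith
  rw [← hs_sq, Real.sqrt_sq hs0, le_div_iff₀ hγ]
  rcases hs0.eq_or_lt with hs_zero | hs_pos
  · rw [← hs_zero, zero_mul]; positivity
  · nlinarith [nonpos_of_mul_nonpos_right hs_gap hs_pos, mul_nonneg (norm_nonneg (T - T'))
      (sub_nonneg.2 hs1)]

end DavisKahan

section MatrixBridge

variable {ι : Type*} [Fintype ι]

lemma norm_toLp_eq_one {v : ι → ℝ} (hv : v ⬝ᵥ v = 1) : ‖toLp 2 v‖ = 1 := by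
  rw [← pow_eq_one_iff_of_nonneg (norm_nonneg _) two_ne_zero, ← real_inner_self_eq_norm_sq,
    EuclideanSpace.inner_toLp_toLp, star_trivial, hv]

lemma toEuclideanCLM_vecMulVec_self [DecidableEq ι] (v : ι → ℝ) (x : EuclideanSpace ℝ ι) :
    toEuclideanCLM (𝕜 := ℝ) (vecMulVec v v) x = ⟪toLp 2 v, x⟫ • toLp 2 v := by
  ext i
  simp [vecMulVec_mulVec, EuclideanSpace.inner_eq_star_dotProduct, dotProduct_comm, mul_comm]

end MatrixBridge

lemma opNorm_vecMulVec_sub_vecMulVec_le {n : ℕ} {v v' : Fin n → ℝ} (hv : v ⬝ᵥ v = 1)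
    (hv' : v' ⬝ᵥ v' = 1) :
    opNorm (vecMulVec v v - vecMulVec v' v') ≤ √(1 - (v ⬝ᵥ v') ^ 2) := by
  have hvv' : ⟪toLp 2 v, toLp 2 v'⟫ = v ⬝ᵥ v' := by
    rw [EuclideanSpace.inner_toLp_toLp, star_trivial, dotProduct_comm]
  refine ContinuousLinearMap.opNorm_le_bound _ (Real.sqrt_nonneg _) fun x => ?_
  rw [map_sub, _root_.sub_apply, toEuclideanCLM_vecMulVec_self, toEuclideanCLM_vecMulVec_self,
    ← hvv']
  exact norm_inner_smul_sub_inner_smul_le (norm_toLp_eq_one hv) (norm_toLp_eq_one hv') x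

theorem stmt_8_general {n : ℕ}
    {M M' : Matrix (Fin n) (Fin n) ℝ} (hM : M.IsHermitian) (hM' : M'.IsHermitian)
    {γ : ℝ} (hγ : 0 < γ) (hgap : γ ≤ eigDesc hM 0 - eigDesc hM 1)
    (v1 v1' : Fin n → ℝ)
    (hv1unit : v1 ⬝ᵥ v1 = 1) (hv1eig : M *ᵥ v1 = eigDesc hM 0 • v1)
    (hv1'unit : v1' ⬝ᵥ v1' = 1) (hv1'eig : M' *ᵥ v1' = eigDesc hM' 0 • v1') :
    opNorm (Matrix.vecMulVec v1 v1 - Matrix.vecMulVec v1' v1')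
      ≤ 2 * opNorm (M - M') / γ := by
  have hu := norm_toLp_eq_one hv1unit
  have hu' := norm_toLp_eq_one hv1'unit
  have hMu : toEuclideanCLM (𝕜 := ℝ) M (toLp 2 v1) = eigDesc hM 0 • toLp 2 v1 := by
    rw [toEuclideanCLM_toLp, hv1eig, toLp_smul]
  have hM'u' : toEuclideanCLM (𝕜 := ℝ) M' (toLp 2 v1') = eigDesc hM' 0 • toLp 2 v1' := by
    rw [toEuclideanCLM_toLp, hv1'eig, toLp_smul]
  calc opNorm (vecMulVec v1 v1 - vecMulVec v1' v1')
      ≤ √(1 - (v1 ⬝ᵥ v1') ^ 2) := opNorm_vecMulVec_sub_vecMulVec_le hv1unit hv1'unit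
    _ = √(1 - ⟪toLp 2 v1, toLp 2 v1'⟫ ^ 2) := by
        rw [EuclideanSpace.inner_toLp_toLp, star_trivial, dotProduct_comm]
    _ ≤ 2 * ‖toEuclideanCLM (𝕜 := ℝ) M - toEuclideanCLM (𝕜 := ℝ) M'‖ / γ :=
        sqrt_one_sub_inner_sq_le_of_eigengap hu hu' hMu hM'u'
          (fun _ => inner_toEuclideanCLM_self_le_eigDesc_one hM (by linarith)
            (norm_ne_zero_iff.1 (hu ▸ one_ne_zero)) hMu)
          (inner_toEuclideanCLM_self_le_eigDesc_zero hM') hγ hgap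
    _ = 2 * opNorm (M - M') / γ := by rw [opNorm, map_sub]

/-- Davis–Kahan bound for the rank-one spectral projector of the
top eigenvector, under a top eigengap `γ`. -/
theorem stmt_8 {n : ℕ} (hn : 2 ≤ n)
    {M M' : Matrix (Fin n) (Fin n) ℝ} (hM : M.IsHermitian) (hM' : M'.IsHermitian)
    {γ : ℝ} (hγ : 0 < γ) (hgap : γ ≤ eigDesc hM 0 - eigDesc hM 1)
    (v1 v1' : Fin n → ℝ)
    (hv1unit : v1 ⬝ᵥ v1 = 1) (hv1eig : M *ᵥ v1 = eigDesc hM 0 • v1)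
    (hv1'unit : v1' ⬝ᵥ v1' = 1) (hv1'eig : M' *ᵥ v1' = eigDesc hM' 0 • v1') :
    opNorm (Matrix.vecMulVec v1 v1 - Matrix.vecMulVec v1' v1')
      ≤ 2 * opNorm (M - M') / γ :=
  stmt_8_general hM hM' hγ hgap v1 v1' hv1unit hv1eig hv1'unit hv1'eig
end
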